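/- Let K ≥ 2, let Y = (Y₁,…,Y_K) be a random vector with Y_k > 0 almost surely for all k, fix an index i, let b_{ij} > 0 for all j ≠ i, set R_i = Y_i^{K−1} / ∏_{j≠i} Y_j^{b_{ij}} and Z = (log Y₁,…,log Y_K), and let p ∈ (0,1). Then the directional quantile envelope D(p) of Z is contained in the closed half-space {z ∈ ℝ^K : (K−1)·z_i − ∑_{j≠i} b_{ij}·z_j ≥ log Q_{R_i}(p)}; equivalently, every z ∈ D(p) satisfies z_i ≥ (1/(K−1))·log Q_{R_i}(p) + ∑_{j≠i} (b_{ij}/(K−1))·z_j (the first tangent hyperplane of Proposition 2). -/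

import Mathlib

open MeasureTheory Real
open scoped ENNReal

/-- The quantile function `Q_X(p) = inf {x : P(X <= x) >= p}`. -/
noncomputable def quantileFn {Ω : Type*} [MeasurableSpace Ω] (μ : MeasureTheory.Measure Ω)
    (X : Ω → ℝ) (p : ℝ) : ℝ :=
  sInf {x : ℝ | ENNReal.ofReal p ≤ μ {ω | X ω ≤ x}}

/-- The `p`-th directional quantile envelope of a random vector `W` with values in `ℝ^K`:
the intersection over unit directions `d` of the half-spaces
`{w : ⟨d, w⟩ ≥ Q_{⟨d,W⟩}(p)}`. -/
noncomputable def dqe {Ω : Type*} [MeasurableSpace Ω] (μ : MeasureTheory.Measure Ω) {K : ℕ}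
    (W : Ω → EuclideanSpace ℝ (Fin K)) (p : ℝ) : Set (EuclideanSpace ℝ (Fin K)) :=
  ⋂ (d : EuclideanSpace ℝ (Fin K)) (_ : ‖d‖ = 1),
    {w : EuclideanSpace ℝ (Fin K) | quantileFn μ (fun ω => (inner ℝ d (W ω) : ℝ)) p ≤ (inner ℝ d w : ℝ)}

/-!
With `v = (K - 1) eᵢ - ∑_{j ≠ i} b_j e_j`, almost surely `⟨v, Z⟩ = log R`.
Quantiles commute with the increasing map `log` (for a positive variable) and with positive
scalings, so `log Q_R(p) = Q_{⟨v,Z⟩}(p) = ‖v‖ Q_{⟨v/‖v‖, Z⟩}(p) ≤ ⟨v, z⟩` for every `z ∈ D(p)`.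
-/

open scoped Pointwise

-- No side conditions: for empty or unbounded `s` both sides are the junk value `0`.
lemma Real.log_sInf_exp_image (s : Set ℝ) : Real.log (sInf (exp '' s)) = sInf s := by
  rcases s.eq_empty_or_nonempty with rfl | hne
  · simp
  by_cases hbdd : BddBelow s
  · rw [← Real.exp_monotone.map_csInf_of_continuousAt Real.continuous_exp.continuousAt hne hbdd,
      Real.log_exp]
  · suffices sInf (exp '' s) = 0 by rw [this, Real.sInf_of_not_bddBelow hbdd, Real.log_zero]
    refine le_antisymm (not_lt.mp fun hpos => ?_) <|
      Real.sInf_nonneg (by rintro _ ⟨x, -, rfl⟩; exact (Real.exp_pos x).le)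
    have hunbdd : ∀ a, ∃ x ∈ s, x < a := by
      simpa [BddBelow, lowerBounds, Set.Nonempty] using hbdd
    obtain ⟨x, hx, hlt⟩ := hunbdd (Real.log (sInf (exp '' s)))
    have hle : sInf (exp '' s) ≤ exp x :=
      csInf_le ⟨0, by rintro _ ⟨y, -, rfl⟩; exact (Real.exp_pos y).le⟩ ⟨x, hx, rfl⟩
    exact (Real.lt_log_iff_exp_lt hpos).mp hlt |>.not_ge hle

section Quantile

variable {Ω : Type*} [MeasurableSpace Ω] {μ : Measure Ω}

lemma quantileFn_congr_ae {X X' : Ω → ℝ} (h : X =ᵐ[μ] X') (p : ℝ) :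
    quantileFn μ X p = quantileFn μ X' p := by
  unfold quantileFn
  congr 1
  ext x
  have hsets : {ω | X ω ≤ x} =ᵐ[μ] {ω | X' ω ≤ x} := by
    filter_upwards [h] with ω hω
    change (X ω ≤ x) = (X' ω ≤ x)
    rw [hω]
  rw [Set.mem_ofPred_eq, Set.mem_ofPred_eq, measure_congr hsets]

lemma quantileFn_const_mul {X : Ω → ℝ} {c : ℝ} (hc : 0 < c) (p : ℝ) :
    quantileFn μ (fun ω => c * X ω) p = c * quantileFn μ X p := by
  unfold quantileFn
  rw [← smul_eq_mul c (sInf _), ← Real.sInf_smul_of_nonneg hc.le]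
  congr 1
  ext x
  simp only [Set.mem_smul_set_iff_inv_smul_mem₀ hc.ne', Set.mem_ofPred_eq, smul_eq_mul,
    ← le_div_iff₀' hc, div_eq_inv_mul]

lemma quantileFn_log {R : Ω → ℝ} (hR : ∀ᵐ ω ∂μ, 0 < R ω) {p : ℝ} (hp : 0 < p) :
    quantileFn μ (fun ω => Real.log (R ω)) p = Real.log (quantileFn μ R p) := by
  set S := {y : ℝ | ENNReal.ofReal p ≤ μ {ω | R ω ≤ y}}
  have hS_pos : S ⊆ Set.range exp := fun y hy => by
    refine ⟨Real.log y, Real.exp_log (not_le.mp fun hy0 => ?_)⟩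
    have hnull : μ {ω | R ω ≤ y} = 0 := by
      rw [measure_eq_zero_iff_ae_notMem]
      filter_upwards [hR] with ω hω using not_le.mpr (hy0.trans_lt hω)
    exact (ENNReal.ofReal_pos.mpr hp).not_ge (hnull ▸ hy)
  have hpre : {x : ℝ | ENNReal.ofReal p ≤ μ {ω | Real.log (R ω) ≤ x}} = exp ⁻¹' S := by
    ext x
    have hsets : {ω | Real.log (R ω) ≤ x} =ᵐ[μ] {ω | R ω ≤ exp x} := by
      filter_upwards [hR] with ω hω
      exact propext (Real.log_le_iff_le_exp hω)
    rw [Set.mem_ofPred_eq, measure_congr hsets]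
    rfl
  unfold quantileFn
  rw [hpre, ← Real.log_sInf_exp_image, Set.image_preimage_eq_of_subset hS_pos]

end Quantile

lemma quantileFn_inner_le_of_mem_dqe {Ω : Type*} [MeasurableSpace Ω] {μ : Measure Ω} {K : ℕ}
    {W : Ω → EuclideanSpace ℝ (Fin K)} {p : ℝ} {z v : EuclideanSpace ℝ (Fin K)}
    (hz : z ∈ dqe μ W p) (hv : v ≠ 0) :
    quantileFn μ (fun ω => inner ℝ v (W ω)) p ≤ inner ℝ v z := by
  have hnorm : 0 < ‖v‖ := norm_pos_iff.mpr hv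
  have hz_unit := Set.mem_iInter₂.mp hz _ (norm_smul_inv_norm (𝕜 := ℝ) hv)
  have hscale (w : EuclideanSpace ℝ (Fin K)) :
      inner ℝ v w = ‖v‖ * inner ℝ (‖v‖⁻¹ • v) w := by
    rw [real_inner_smul_left, mul_inv_cancel_left₀ hnorm.ne']
  simp only [hscale, quantileFn_const_mul hnorm]
  exact mul_le_mul_of_nonneg_left hz_unit hnorm.le

lemma Real.log_rpow_div_prod_rpow {ι : Type*} {s : Finset ι} {x : ℝ} {y : ι → ℝ} (hx : 0 < x)
    (hy : ∀ j ∈ s, 0 < y j) (a : ℝ) (b : ι → ℝ) :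
    Real.log (x ^ a / ∏ j ∈ s, y j ^ b j) = a * Real.log x - ∑ j ∈ s, b j * Real.log (y j) := by
  rw [Real.log_div (Real.rpow_pos_of_pos hx a).ne'
      (Finset.prod_pos fun j hj => Real.rpow_pos_of_pos (hy j hj) (b j)).ne',
    Real.log_rpow hx, Real.log_prod fun j hj => (Real.rpow_pos_of_pos (hy j hj) (b j)).ne']
  exact congrArg _ (Finset.sum_congr rfl fun j hj => Real.log_rpow (hy j hj) (b j))

section AllometricNormal

variable {ι : Type*} [DecidableEq ι]

noncomputable def allometricNormal (i : ι) (a : ℝ) (b : ι → ℝ) : EuclideanSpace ℝ ι :=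
  WithLp.toLp 2 (Function.update (-b) i a)

lemma inner_allometricNormal [Fintype ι] (i : ι) (a : ℝ) (b : ι → ℝ) (w : EuclideanSpace ℝ ι) :
    inner ℝ (allometricNormal i a b) w = a * w i - ∑ j ∈ Finset.univ.erase i, b j * w j := by
  simp only [allometricNormal, PiLp.inner_apply, RCLike.inner_apply, conj_trivial]
  rw [← Finset.add_sum_erase _ _ (Finset.mem_univ i), sub_eq_add_neg, ← Finset.sum_neg_distrib,
    Function.update_self, mul_comm]
  refine congrArg _ (Finset.sum_congr rfl fun j hj => ?_)
  rw [Function.update_of_ne (Finset.ne_of_mem_erase hj), Pi.neg_apply, mul_neg, mul_comm]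

lemma allometricNormal_ne_zero (i : ι) {a : ℝ} (ha : a ≠ 0) (b : ι → ℝ) :
    allometricNormal i a b ≠ 0 := fun h => ha <| by
  simpa [allometricNormal] using congrArg (· i) h

end AllometricNormal

theorem stmt5_general {Ω : Type*} [MeasurableSpace Ω] (μ : Measure Ω)
    {K : ℕ} (hK : 2 ≤ K)
    (Y : Ω → Fin K → ℝ) (hY : ∀ k, ∀ᵐ ω ∂μ, 0 < Y ω k) (i : Fin K)
    (b : Fin K → ℝ)
    (p : ℝ) (hp : p ∈ Set.Ioo (0 : ℝ) 1)
    (R : Ω → ℝ)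
    (hR : R = fun ω => (Y ω i) ^ ((K : ℝ) - 1) / ∏ j ∈ Finset.univ.erase i, (Y ω j) ^ (b j))
    (Z : Ω → EuclideanSpace ℝ (Fin K)) (hZ : ∀ ω k, Z ω k = Real.log (Y ω k)) :
    dqe μ Z p ⊆
      {z : EuclideanSpace ℝ (Fin K) |
        Real.log (quantileFn μ R p) ≤
          ((K : ℝ) - 1) * z i - ∑ j ∈ Finset.univ.erase i, b j * z j} := by
  intro z hz
  have hK1 : (K : ℝ) - 1 ≠ 0 := by
    have : (2 : ℝ) ≤ K := by exact_mod_cast hK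
    linarith
  have hYpos : ∀ᵐ ω ∂μ, ∀ k, 0 < Y ω k := ae_all_iff.mpr hY
  have hRpos : ∀ᵐ ω ∂μ, 0 < R ω := by
    filter_upwards [hYpos] with ω hω
    rw [hR]
    exact div_pos (Real.rpow_pos_of_pos (hω i) _)
      (Finset.prod_pos fun j _ => Real.rpow_pos_of_pos (hω j) _)
  have hlogR : (fun ω => inner ℝ (allometricNormal i ((K : ℝ) - 1) b) (Z ω)) =ᵐ[μ]
      fun ω => Real.log (R ω) := by
    filter_upwards [hYpos] with ω hω
    simp only [inner_allometricNormal, hZ, hR,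
      Real.log_rpow_div_prod_rpow (hω i) fun j _ => hω j]
  calc Real.log (quantileFn μ R p)
      = quantileFn μ (fun ω => Real.log (R ω)) p := (quantileFn_log hRpos hp.1).symm
    _ = quantileFn μ (fun ω => inner ℝ (allometricNormal i ((K : ℝ) - 1) b) (Z ω)) p :=
        quantileFn_congr_ae hlogR.symm p
    _ ≤ inner ℝ (allometricNormal i ((K : ℝ) - 1) b) z :=
        quantileFn_inner_le_of_mem_dqe hz (allometricNormal_ne_zero i hK1 b)
    _ = ((K : ℝ) - 1) * z i - ∑ j ∈ Finset.univ.erase i, b j * z j :=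
        inner_allometricNormal i _ b z

theorem stmt5 {Ω : Type*} [MeasurableSpace Ω] (μ : Measure Ω) [IsProbabilityMeasure μ]
    {K : ℕ} (hK : 2 ≤ K)
    (Y : Ω → Fin K → ℝ) (hY : ∀ k, ∀ᵐ ω ∂μ, 0 < Y ω k) (i : Fin K)
    (b : Fin K → ℝ) (hb : ∀ j, j ≠ i → 0 < b j)
    (p : ℝ) (hp : p ∈ Set.Ioo (0 : ℝ) 1)
    (R : Ω → ℝ)
    (hR : R = fun ω => (Y ω i) ^ ((K : ℝ) - 1) / ∏ j ∈ Finset.univ.erase i, (Y ω j) ^ (b j))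
    (Z : Ω → EuclideanSpace ℝ (Fin K)) (hZ : ∀ ω k, Z ω k = Real.log (Y ω k)) :
    dqe μ Z p ⊆
      {z : EuclideanSpace ℝ (Fin K) |
        Real.log (quantileFn μ R p) ≤
          ((K : ℝ) - 1) * z i - ∑ j ∈ Finset.univ.erase i, b j * z j} :=
  stmt5_general μ hK Y hY i b p hp R hR Z hZ
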